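/- arXiv:2403.09145 — 9 statements merged into one kernel-verified Lean document; each statement's English description precedes it below -/
import Mathlib

section
/- For all Boolean values x and y, OR₂(x,y) = Σ_{z∈{0,1}} NAND₂(x,z)·NAND₂(y,z)·u₀(z). (Hence OR₂ is realized, over an acyclic constraint hypergraph, from NAND₂ and the unary function u₀ = [1,−1].) -/
/-- Binary OR constraint: 0 if both inputs are 0, else 1. -/
def OR2 (x y : Bool) : ℂ := if x = false ∧ y = false then 0 else 1

/-- Binary NAND constraint: 0 if both inputs are 1, else 1. -/
def NAND2 (x y : Bool) : ℂ := if x = true ∧ y = true then 0 else 1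

/-- Unary constraint u₀ = [1, −1]. -/
def u0 (z : Bool) : ℂ := if z = false then 1 else -1

theorem stmt_0 : ∀ x y : Bool,
    OR2 x y = ∑ z : Bool, NAND2 x z * NAND2 y z * u0 z := by
  intro x y
  fin_cases x <;> fin_cases y <;> simp [OR2, NAND2, u0, Fin.sum_univ_succ]
end

section
/- For all Boolean values x and y, NAND₂(x,y) = −Σ_{z∈{0,1}} OR₂(x,z)·OR₂(y,z)·u₀(z). (Hence NAND₂ is realized, over an acyclic constraint hypergraph, from OR₂ and the unary function u₀ = [1,−1].) -/
theorem stmt_1 : ∀ x y : Bool,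
    NAND2 x y = -∑ z : Bool, OR2 x z * OR2 y z * u0 z := by
  intro x y; fin_cases x <;> fin_cases y <;> simp [NAND2, OR2, u0, Fin.sum_univ_succ]
end

section
/- For every integer k ≥ 2 and all Boolean values x₁,…,x_k, OR_k(x₁,…,x_k) = −Σ_{w∈{0,1}} u₀(w)·∏_{i=1}^{k} Implies(x_i,w). (Hence OR_k is acyclic-T-constructible from {Implies, u₀}.) -/
/-- k-ary OR constraint: 1 if at least one input is 1, else 0. -/
def ORk {k : ℕ} (x : Fin k → Bool) : ℂ := if ∃ i, x i = true then 1 else 0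

/-- Implication constraint: 0 if x = 1 and y = 0, else 1. -/
def Impliesc (x y : Bool) : ℂ := if x = true ∧ y = false then 0 else 1

theorem stmt_4 : ∀ k : ℕ, 2 ≤ k → ∀ x : Fin k → Bool,
    ORk x = -∑ w : Bool, u0 w * ∏ i : Fin k, Impliesc (x i) w := by
  intro k hk x
  have hprodT : ∏ i : Fin k, Impliesc (x i) true = 1 := by
    apply Finset.prod_eq_one
    intro i _
    simp [Impliesc]
  have hprodF : ∏ i : Fin k, Impliesc (x i) false =
      (if ∃ i, x i = true then (0:ℂ) else 1) := by
    by_cases h : ∃ i, x i = true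
    · obtain ⟨i, hi⟩ := h
      rw [if_pos ⟨i, hi⟩]
      apply Finset.prod_eq_zero (Finset.mem_univ i)
      simp [Impliesc, hi]
    · rw [if_neg h]
      apply Finset.prod_eq_one
      intro i _
      have : x i = false := by
        cases hxi : x i
        · rfl
        · exact absurd ⟨i, hxi⟩ h
      simp [Impliesc, this]
  rw [Fintype.sum_bool, hprodT, hprodF]
  simp only [u0, ORk]
  by_cases h : ∃ i, x i = true <;> simp [h]
end

section
/- For every integer k ≥ 2 and all Boolean values x₁,…,x_k, NAND_k(x₁,…,x_k) = Σ_{z∈{0,1}} u₀(z)·∏_{i=1}^{k} Implies(z,x_i). (Hence NAND_k is acyclic-T-constructible from {Implies, u₀}.) -/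
/-- k-ary NAND constraint: 0 if all inputs are 1, else 1. -/
def NANDk {k : ℕ} (x : Fin k → Bool) : ℂ := if ∀ i, x i = true then 0 else 1

theorem stmt_5 : ∀ k : ℕ, 2 ≤ k → ∀ x : Fin k → Bool,
    NANDk x = ∑ z : Bool, u0 z * ∏ i : Fin k, Impliesc z (x i) := by
  intro k hk x
  rw [Fintype.sum_bool]
  have h1 : ∀ i : Fin k, Impliesc false (x i) = 1 := by
    intro i; simp [Impliesc]
  have h2 : (∏ i : Fin k, Impliesc true (x i)) =
      if ∀ i, x i = true then 1 else 0 := by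
    split
    · next h => exact Finset.prod_eq_one (fun i _ => by simp [Impliesc, h i])
    · next h =>
      push_neg at h
      obtain ⟨i, hi⟩ := h
      exact Finset.prod_eq_zero (Finset.mem_univ i)
        (by simp [Impliesc, Bool.eq_false_iff.mpr hi])
  simp only [h2, Finset.prod_congr rfl (fun i _ => h1 i), Finset.prod_const_one,
    u0, NANDk]
  split <;> norm_num
end

section
/- For every integer k ≥ 2 and all Boolean values x₁,…,x_k, OR_k(x₁,…,x_k) = −Σ_{w∈{0,1}} Σ_{z₁,…,z_k∈{0,1}} u₀(w)·∏_{i=1}^{k} OR₂(z_i,w)·XOR(x_i,z_i). (This witnesses that OR_k is acyclic-T-constructible from {OR₂, XOR, u₀}.) -/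
/-- Binary XOR (disequality) constraint: 1 if inputs differ, else 0. -/
def XORc (x y : Bool) : ℂ := if x ≠ y then 1 else 0

theorem stmt_6 : ∀ k : ℕ, 2 ≤ k → ∀ x : Fin k → Bool,
    ORk x = -∑ w : Bool, ∑ z : Fin k → Bool,
      u0 w * ∏ i : Fin k, OR2 (z i) w * XORc (x i) (z i) := by
  intro k hk x
  have key : ∀ w : Bool, (∑ z : Fin k → Bool, ∏ i : Fin k, OR2 (z i) w * XORc (x i) (z i))
      = ∏ i : Fin k, OR2 (!x i) w := by
    intro w
    have h := Finset.prod_univ_sum (fun _ : Fin k => (Finset.univ : Finset Bool))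
      (fun i b => OR2 b w * XORc (x i) b)
    rw [Fintype.piFinset_univ] at h
    rw [← h]
    apply Finset.prod_congr rfl
    intro i _
    rw [Fintype.sum_bool]
    cases hx : x i <;> simp [OR2, XORc, hx]
  rw [Fintype.sum_bool]
  simp only [← Finset.mul_sum]
  rw [key, key]
  have h1 : (∏ i : Fin k, OR2 (!x i) true) = 1 := by
    apply Finset.prod_eq_one
    intro i _
    simp [OR2]
  rw [h1]
  by_cases hx : ∃ i, x i = true
  · obtain ⟨i, hi⟩ := hx
    have h0 : (∏ j : Fin k, OR2 (!x j) false) = 0 := by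
      apply Finset.prod_eq_zero (Finset.mem_univ i)
      simp [OR2, hi]
    rw [h0]
    simp [ORk, u0]
    exact ⟨i, hi⟩
  · have h0 : (∏ j : Fin k, OR2 (!x j) false) = 1 := by
      apply Finset.prod_eq_one
      intro j _
      have : x j = false := by
        cases hxj : x j
        · rfl
        · exact absurd ⟨j, hxj⟩ hx
      simp [OR2, this]
    rw [h0]
    simp [ORk, u0, hx]
end

section
/- For every integer k ≥ 2 and all Boolean values x₁,…,x_k, NAND_k(x₁,…,x_k) = Σ_{z∈{0,1}} Σ_{w₁,…,w_k∈{0,1}} u₀(z)·∏_{i=1}^{k} OR₂(w_i,x_i)·XOR(z,w_i). (This witnesses that NAND_k is acyclic-T-constructible from {OR₂, XOR, u₀}.) -/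
lemma stmt7_inner_sum {k : ℕ} (x : Fin k → Bool) (z : Bool) :
    ∑ w : Fin k → Bool, ∏ i : Fin k, OR2 (w i) (x i) * XORc z (w i)
      = ∏ i : Fin k, OR2 (!z) (x i) := by
  rw [Fintype.sum_eq_single (fun _ => !z)]
  · apply Finset.prod_congr rfl
    intro i _
    have : XORc z (!z) = 1 := by cases z <;> simp [XORc]
    simp [this]
  · intro w hw
    obtain ⟨i, hi⟩ := Function.ne_iff.mp hw
    apply Finset.prod_eq_zero (Finset.mem_univ i)
    have : w i = z := by cases z <;> cases h : w i <;> simp_all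
    simp [this, XORc]

theorem stmt_7 : ∀ k : ℕ, 2 ≤ k → ∀ x : Fin k → Bool,
    NANDk x = ∑ z : Bool, ∑ w : Fin k → Bool,
      u0 z * ∏ i : Fin k, OR2 (w i) (x i) * XORc z (w i) := by
  intro k _ x
  have h : ∀ z : Bool, ∑ w : Fin k → Bool,
      u0 z * ∏ i : Fin k, OR2 (w i) (x i) * XORc z (w i)
      = u0 z * ∏ i : Fin k, OR2 (!z) (x i) := by
    intro z
    rw [← Finset.mul_sum, stmt7_inner_sum]
  simp only [Fintype.sum_bool, h, Bool.not_false, Bool.not_true]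
  have h1 : ∏ i : Fin k, OR2 true (x i) = 1 :=
    Finset.prod_eq_one (fun i _ => by simp [OR2])
  by_cases hall : ∀ i, x i = true
  · have h2 : ∏ i : Fin k, OR2 false (x i) = 1 :=
      Finset.prod_eq_one (fun i _ => by simp [OR2, hall i])
    rw [h1, h2]; simp [NANDk, hall, u0]
  · obtain ⟨i, hi⟩ := not_forall.mp hall
    have hxi : x i = false := by simpa using hi
    have h2 : ∏ j : Fin k, OR2 false (x j) = 0 :=
      Finset.prod_eq_zero (Finset.mem_univ i) (by simp [OR2, hxi])
    rw [h1, h2]; simp [NANDk, hall, u0]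
end

section
/- Let a,b be nonzero complex numbers and let f be the binary constraint function with f(0,0)=1, f(0,1)=a, f(1,0)=0, f(1,1)=b. Let u be the unary function with u(0)=b/a, u(1)=1, and u' the unary function with u'(0)=−a², u'(1)=1. Then for all Boolean values x and y, Σ_{z∈{0,1}} f(x,z)·f(y,z)·u(x)·u(y)·u'(z) = b²·OR₂(x,y). (Hence OR₂ is acyclic-T-constructible from {f,u,u'}.) -/
theorem stmt_10 (a b : ℂ) (ha : a ≠ 0) (hb : b ≠ 0)
    (f : Bool → Bool → ℂ)
    (hf00 : f false false = 1) (hf01 : f false true = a)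
    (hf10 : f true false = 0) (hf11 : f true true = b)
    (u u' : Bool → ℂ)
    (hu0 : u false = b / a) (hu1 : u true = 1)
    (hu'0 : u' false = -a ^ 2) (hu'1 : u' true = 1) :
    ∀ x y : Bool,
      (∑ z : Bool, f x z * f y z * u x * u y * u' z) = b ^ 2 * OR2 x y := by
  intro x y
  rw [Fintype.sum_bool]
  cases x <;> cases y <;>
    simp only [OR2, hf00, hf01, hf10, hf11, hu0, hu1, hu'0, hu'1, if_true, if_false,
      and_self, Bool.true_eq_false, Bool.false_eq_true, false_and, and_false, if_neg,
      not_false_eq_true, ite_true, ite_false] <;>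
    field_simp <;> ring
end

section
/- Let a,b be nonzero complex numbers and let f be the binary constraint function with f(0,0)=0, f(0,1)=a, f(1,0)=b, f(1,1)=1. Let u be the unary function with u(0)=1, u(1)=a, and u' the unary function with u'(0)=−1/b², u'(1)=1. Then for all Boolean values x and y, Σ_{z∈{0,1}} f(x,z)·f(y,z)·u(x)·u(y)·u'(z) = a²·NAND₂(x,y). (Hence NAND₂ is acyclic-T-constructible from {f,u,u'}.) -/
theorem stmt_11 (a b : ℂ) (ha : a ≠ 0) (hb : b ≠ 0)
    (f : Bool → Bool → ℂ)
    (hf00 : f false false = 0) (hf01 : f false true = a)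
    (hf10 : f true false = b) (hf11 : f true true = 1)
    (u u' : Bool → ℂ)
    (hu0 : u false = 1) (hu1 : u true = a)
    (hu'0 : u' false = -(1 / b ^ 2)) (hu'1 : u' true = 1) :
    ∀ x y : Bool,
      (∑ z : Bool, f x z * f y z * u x * u y * u' z) = a ^ 2 * NAND2 x y := by
  intro x y
  cases x <;> cases y <;>
    simp only [Fintype.sum_bool, NAND2, hf00, hf01, hf10, hf11, hu0, hu1, hu'0, hu'1,
      if_true, if_false]
  · norm_num; ring
  · norm_num; ring
  · norm_num; ring
  · norm_num
    field_simp
    ring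
end

section
/- Let a,b,c be complex numbers with abc ≠ 0, ab ≠ c, and ab ≠ −c, and let f be the binary constraint function (1,a,b,c). Then there exist a nonzero complex constant λ and unary functions u, u', v from Boolean values to complex numbers such that for all Boolean values x and y, NAND₂(x,y) = λ · Σ_{z∈{0,1}} Σ_{w∈{0,1}} Σ_{w'∈{0,1}} f(x,w)·f(z,w)·v(w)·f(y,w')·f(z,w')·v(w')·u(x)·u(y)·u'(z). (That is, NAND₂ is acyclic-T-constructible from {f,u,u',v}.) -/
open Finset

section RowPairing

variable {α β R : Type*} [Fintype β] [CommSemiring R]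

def rowPairing (f : α → β → R) (v : β → R) (x z : α) : R :=
  ∑ w, f x w * f z w * v w

theorem rowPairing_comm (f : α → β → R) (v : β → R) (x z : α) :
    rowPairing f v x z = rowPairing f v z x := by
  simp only [rowPairing, mul_comm (f x _)]

theorem sum_sum_sum_eq_mul_rowPairing [Fintype α] (f : α → β → R) (u u' : α → R)
    (v : β → R) (x y : α) :
    ∑ z, ∑ w, ∑ w', f x w * f z w * v w * f y w' * f z w' * v w' * u x * u y * u' z =
      u x * u y * ∑ z, u' z * rowPairing f v x z * rowPairing f v y z := by
  rw [mul_sum]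
  refine sum_congr rfl fun z _ => ?_
  rw [mul_assoc (u' z), rowPairing, rowPairing, sum_mul_sum, mul_sum, mul_sum]
  refine sum_congr rfl fun w _ => ?_
  rw [mul_sum, mul_sum]
  refine sum_congr rfl fun w' _ => ?_
  ring

end RowPairing

theorem exists_nand2_eq_rescaled_of_symm (H : Bool → Bool → ℂ)
    (hsymm : H true false = H false true)
    (h00 : H false false ≠ 0) (h01 : H false true ≠ 0) (h11 : H true true = 0) :
    ∃ lam : ℂ, lam ≠ 0 ∧ ∃ u : Bool → ℂ, ∀ x y,
      NAND2 x y = lam * (u x * u y * H x y) := by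
  refine ⟨(H false false)⁻¹, inv_ne_zero h00,
    fun x => bif x then H false false / H false true else 1, ?_⟩
  rintro (_ | _) (_ | _) <;> simp [NAND2, hsymm, h11] <;> field_simp

theorem exists_nand2_eq_rescaled_sum_of_symm (G : Bool → Bool → ℂ)
    (hsymm : G true false = G false true) (h00 : G false false = 0) (h01 : G false true ≠ 0)
    (h11 : G true true ≠ 0) :
    ∃ lam : ℂ, lam ≠ 0 ∧ ∃ u u' : Bool → ℂ, ∀ x y,
      NAND2 x y = lam * (u x * u y * ∑ z, u' z * G x z * G y z) := by
  set u' : Bool → ℂ := fun z => bif z then -G false true ^ 2 else G true true ^ 2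
  obtain ⟨lam, hlam, u, hnand⟩ :=
    exists_nand2_eq_rescaled_of_symm (fun x y => ∑ z, u' z * G x z * G y z)
      (by simp only [Fintype.sum_bool, u', hsymm, cond_true, cond_false]; ring)
      (by simp [u', h00, h01])
      (by simp [u', h00, h01, h11])
      (by simp only [Fintype.sum_bool, u', hsymm, cond_true, cond_false]; ring)
  exact ⟨lam, hlam, u, u', hnand⟩

theorem stmt_13 (a b c : ℂ) (habc : a * b * c ≠ 0)
    (hne1 : a * b ≠ c) (hne2 : a * b ≠ -c)
    (f : Bool → Bool → ℂ)
    (hf00 : f false false = 1) (hf01 : f false true = a)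
    (hf10 : f true false = b) (hf11 : f true true = c) :
    ∃ lam : ℂ, lam ≠ 0 ∧ ∃ u u' v : Bool → ℂ,
      ∀ x y : Bool,
        NAND2 x y = lam * ∑ z : Bool, ∑ w : Bool, ∑ w' : Bool,
          f x w * f z w * v w * f y w' * f z w' * v w' * u x * u y * u' z := by
  have ha : a ≠ 0 := left_ne_zero_of_mul (left_ne_zero_of_mul habc)
  set v : Bool → ℂ := fun w => bif w then 1 else -a ^ 2
  have hG (x z : Bool) :
      rowPairing f v x z = -a ^ 2 * f x false * f z false + f x true * f z true := by
    simp only [rowPairing, Fintype.sum_bool, v, cond_true, cond_false]; ring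
  have hG00 : rowPairing f v false false = 0 := by rw [hG, hf00, hf01]; ring
  have hG01 : rowPairing f v false true = a * (c - a * b) := by
    rw [hG, hf00, hf01, hf10, hf11]; ring
  have hG11 : rowPairing f v true true = (c - a * b) * (c + a * b) := by rw [hG, hf10, hf11]; ring
  have hsub : c - a * b ≠ 0 := sub_ne_zero.mpr (Ne.symm hne1)
  have hadd : c + a * b ≠ 0 := fun h => hne2 (by linear_combination h)
  obtain ⟨lam, hlam, u, u', hnand⟩ :=
    exists_nand2_eq_rescaled_sum_of_symm (rowPairing f v) (rowPairing_comm f v _ _) hG00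
      (hG01 ▸ mul_ne_zero ha hsub) (hG11 ▸ mul_ne_zero hsub hadd)
  exact ⟨lam, hlam, u, u', v, fun x y => by rw [hnand, sum_sum_sum_eq_mul_rowPairing]⟩
end
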